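/- arXiv:2401.12984 — 2 statements merged into one kernel-verified Lean document; each statement's English description precedes it below -/
import Mathlib

section
/- Let $n \ge 7$ be an integer with $n \equiv 0 \pmod 2$ and let $G$ be a simple graph on $n$ vertices. If the signless Laplacian spectral radius of $G$ is at least the signless Laplacian spectral radius of the graph $K_2 \vee (K_1 \cup K_{n-3})$, then either $G$ is isomorphic to $K_2 \vee (K_1 \cup K_{n-3})$, or for every edge $e$ of $G$ there exists a perfect matching of $G$ containing $e$. -/
open Classical in
/-- The adjacency matrix of a simple graph, with real entries. -/
noncomputable def adjMat {V : Type} [Fintype V] (G : SimpleGraph V) : Matrix V V ℝ :=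
  fun i j => if G.Adj i j then 1 else 0

/-- The largest real eigenvalue of a real matrix. -/
noncomputable def maxEig {V : Type} [Fintype V] (M : Matrix V V ℝ) : ℝ :=
  sSup {t : ℝ | ∃ x : V → ℝ, x ≠ 0 ∧ M.mulVec x = t • x}

/-- The spectral radius (largest adjacency eigenvalue) of a graph. -/
noncomputable def specRad {V : Type} [Fintype V] (G : SimpleGraph V) : ℝ :=
  maxEig (adjMat G)

/-- The signless Laplacian matrix `Q(G) = D(G) + A(G)`. -/
noncomputable def qMat {V : Type} [Fintype V] [DecidableEq V] (G : SimpleGraph V) :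
    Matrix V V ℝ :=
  Matrix.diagonal (fun v => ∑ w, adjMat G v w) + adjMat G

/-- The signless Laplacian spectral radius of a graph. -/
noncomputable def qRad {V : Type} [Fintype V] [DecidableEq V] (G : SimpleGraph V) : ℝ :=
  maxEig (qMat G)

/-- The graph `K_s ∨ (a K_1 ∪ K_{n-s-a})` on vertex set `Fin n`:
the first `s` vertices form a clique joined to everything, the next `a` vertices are
independent, and the last `n - s - a` vertices form a clique. -/
def modelA (n s a : ℕ) : SimpleGraph (Fin n) where
  Adj i j := i ≠ j ∧ ((i : ℕ) < s ∨ (j : ℕ) < s ∨ (s + a ≤ (i : ℕ) ∧ s + a ≤ (j : ℕ)))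
  symm := ⟨by rintro i j ⟨h1, h2⟩; exact ⟨h1.symm, by tauto⟩⟩
  loopless := ⟨fun i h => h.1 rfl⟩

/-- The graph `s K_1 ∨ (a K_1 ∪ K_{n-s-a})` on vertex set `Fin n`:
the first `s` vertices are independent but joined to everything else, the next `a`
vertices are independent, and the last `n - s - a` vertices form a clique. -/
def modelB (n s a : ℕ) : SimpleGraph (Fin n) where
  Adj i j := i ≠ j ∧ (((i : ℕ) < s ∧ ¬ (j : ℕ) < s) ∨ ((j : ℕ) < s ∧ ¬ (i : ℕ) < s) ∨
    (s + a ≤ (i : ℕ) ∧ s + a ≤ (j : ℕ)))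
  symm := ⟨by rintro i j ⟨h1, h2⟩; exact ⟨h1.symm, by tauto⟩⟩
  loopless := ⟨fun i h => h.1 rfl⟩

/-- `M` is a matching of `G`: a set of pairwise disjoint edges of `G`. -/
def IsMatchingIn {V : Type} (G : SimpleGraph V) (M : Finset (Sym2 V)) : Prop :=
  (↑M : Set (Sym2 V)) ⊆ G.edgeSet ∧
    ∀ e ∈ M, ∀ f ∈ M, e ≠ f → ∀ v : V, ¬(v ∈ e ∧ v ∈ f)

/-- `H` is an `S(k)`-factor of `G`: a spanning subgraph of `G` each of whose connected
components is isomorphic to a star `K_{1,m}` with `1 ≤ m ≤ k`. -/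
def IsSkFactor {V : Type} [Fintype V] (G H : SimpleGraph V) (k : ℕ) : Prop :=
  H ≤ G ∧ ∀ c : H.ConnectedComponent, ∃ m : ℕ, 1 ≤ m ∧ m ≤ k ∧
    Nonempty ((H.induce c.supp) ≃g completeBipartiteGraph Unit (Fin m))

/-!
If `Q x = t x` with `t > 0`, then at a vertex `v` maximising `|x_v| / d_v` one gets
`t d_v ≤ d_v² + ∑_{u ∼ v} d_u`, and counting degrees bounds the right-hand side by
`(2n - 4 + 2/(n - 1)) d_v` as soon as the complement of `G` has at least `n - 2` edges. On the
other hand `K_2 ∨ (K_1 ∪ K_{n-3})` has an eigenvector constant on its three vertex classes whose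
eigenvalue, a root of a cubic, exceeds `2n - 4 + 2/(n - 1)`. Hence `G` misses at most `n - 3`
edges.

If some vertex has degree at most `2`, its `n - 3` non-neighbours already account for all missing
edges, and `G` is `K_2 ∨ (K_1 ∪ K_{n-3})`. Otherwise, for an edge `uv`, the graph `G - u - v` has
no isolated vertex and at most `(n - 2) - 1` non-edges; repeatedly matching a vertex with the most
non-neighbours to its neighbour with the most non-neighbours keeps the remaining graph in this
regime (with a sharper bound at `4` vertices) until nothing is left.
-/

open Finset SimpleGraph Matrix Fintype

section Spectral

variable {V : Type} [Fintype V]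

lemma bddAbove_eigenvalues (M : Matrix V V ℝ) :
    BddAbove {t : ℝ | ∃ x : V → ℝ, x ≠ 0 ∧ M *ᵥ x = t • x} := by
  classical
  refine ((Module.End.finite_hasEigenvalue (Matrix.toLin' M)).subset ?_).bddAbove
  rintro t ⟨x, hx, h⟩
  exact Module.End.hasEigenvalue_of_hasEigenvector
    ⟨Module.End.mem_eigenspace_iff.2 (by simpa using h), hx⟩

lemma le_maxEig {M : Matrix V V ℝ} {t : ℝ} {x : V → ℝ} (hx : x ≠ 0) (h : M *ᵥ x = t • x) :
    t ≤ maxEig M :=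
  le_csSup (bddAbove_eigenvalues M) ⟨x, hx, h⟩

lemma maxEig_le {M : Matrix V V ℝ} {c : ℝ} (hc : 0 ≤ c)
    (h : ∀ (t : ℝ) (x : V → ℝ), x ≠ 0 → M *ᵥ x = t • x → t ≤ c) : maxEig M ≤ c :=
  Real.sSup_le (fun _ ⟨x, hx, hx'⟩ => h _ x hx hx') hc

variable (G : SimpleGraph V) [DecidableRel G.Adj]

lemma adjMat_eq_adjMatrix : adjMat G = G.adjMatrix ℝ := by
  ext i j
  simp [adjMat, adjMatrix_apply]

variable [DecidableEq V]

lemma qMat_mulVec_apply (x : V → ℝ) (v : V) :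
    (qMat G *ᵥ x) v = G.degree v * x v + ∑ u ∈ G.neighborFinset v, x u := by
  have hdeg : ∑ w, adjMat G v w = G.degree v := by
    simp [adjMat_eq_adjMatrix, ← card_neighborFinset_eq_degree, neighborFinset_eq_filter]
  rw [qMat, add_mulVec, Pi.add_apply, mulVec_diagonal, hdeg, adjMat_eq_adjMatrix,
    adjMatrix_mulVec_apply]

lemma exists_mul_degree_le_of_qMat_mulVec {t : ℝ} (ht : 0 < t) {x : V → ℝ} (hx : x ≠ 0)
    (h : qMat G *ᵥ x = t • x) :
    ∃ v, 0 < G.degree v ∧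
      t * G.degree v ≤ (G.degree v : ℝ) ^ 2 + ∑ u ∈ G.neighborFinset v, (G.degree u : ℝ) := by
  have heig (v : V) : t * x v = G.degree v * x v + ∑ u ∈ G.neighborFinset v, x u := by
    rw [← qMat_mulVec_apply, h, Pi.smul_apply, smul_eq_mul]
  have hiso (v : V) (hv : G.degree v = 0) : x v = 0 := by
    have hN : G.neighborFinset v = ∅ := by rwa [← card_eq_zero, card_neighborFinset_eq_degree]
    have := heig v
    rw [hv, hN, Finset.sum_empty, Nat.cast_zero, zero_mul, add_zero] at this
    exact (mul_eq_zero.1 this).resolve_left ht.ne'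
  -- The maximiser of `|x v| / deg v` controls every neighbour: `|x u| ≤ deg u * r`.
  obtain ⟨u₀, hu₀⟩ := Function.ne_iff.1 hx
  obtain ⟨v, -, hmax⟩ := exists_max_image univ (fun v => |x v| / G.degree v) ⟨u₀, mem_univ _⟩
  set r := |x v| / G.degree v with hr_def
  have hr : 0 < r := by
    have hdeg₀ : 0 < G.degree u₀ := Nat.pos_of_ne_zero fun h0 => hu₀ (hiso u₀ h0)
    exact (div_pos (abs_pos.2 hu₀) (Nat.cast_pos.2 hdeg₀)).trans_le (hmax u₀ (mem_univ _))
  have hv : 0 < G.degree v := by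
    by_contra h0
    rw [hr_def, Nat.eq_zero_of_not_pos h0, Nat.cast_zero, div_zero] at hr
    exact lt_irrefl 0 hr
  have hxv : |x v| = G.degree v * r := by
    rw [hr_def, mul_div_cancel₀ _ (Nat.cast_ne_zero.2 hv.ne')]
  have hnbr : ∀ u ∈ G.neighborFinset v, |x u| ≤ G.degree u * r := by
    intro u hu
    rw [mem_neighborFinset] at hu
    have hdu : (0 : ℝ) < G.degree u :=
      Nat.cast_pos.2 <| (G.degree_pos_iff_exists_adj u).2 ⟨v, hu.symm⟩
    rw [← div_le_iff₀' hdu]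
    exact hmax u (mem_univ _)
  refine ⟨v, hv, le_of_mul_le_mul_right ?_ hr⟩
  calc t * G.degree v * r = |t * x v| := by rw [abs_mul, abs_of_pos ht, hxv, mul_assoc]
    _ ≤ G.degree v * |x v| + ∑ u ∈ G.neighborFinset v, |x u| := by
        rw [heig]
        refine (abs_add_le _ _).trans (add_le_add ?_ (abs_sum_le_sum_abs _ _))
        rw [abs_mul, Nat.abs_cast]
    _ ≤ G.degree v * (G.degree v * r) + ∑ u ∈ G.neighborFinset v, G.degree u * r := by
        rw [hxv]; gcongr with u hu; exact hnbr u hu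
    _ = ((G.degree v : ℝ) ^ 2 + ∑ u ∈ G.neighborFinset v, (G.degree u : ℝ)) * r := by
        rw [add_mul, sum_mul]; ring

end Spectral

section Degrees

variable {V : Type} [Fintype V] [DecidableEq V] (G : SimpleGraph V) [DecidableRel G.Adj]

lemma degree_add_compl_degree (v : V) : G.degree v + Gᶜ.degree v + 1 = card V := by
  have := G.degree_lt_card_verts v
  rw [degree_compl]
  omega

lemma sum_degree_add_two_mul_card_compl :
    ∑ v, G.degree v + 2 * #Gᶜ.edgeFinset + card V = card V * card V := by
  rw [← sum_degrees_eq_twice_card_edges, ← sum_add_distrib]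
  calc ∑ v, (G.degree v + Gᶜ.degree v) + card V = ∑ v, (G.degree v + Gᶜ.degree v + 1) := by
        simp [sum_add_distrib]
    _ = card V * card V := by simp [degree_add_compl_degree]

omit [DecidableEq V] in
lemma sq_degree_add_sum_degree_add_le {v : V} {c : ℕ}
    (hc : ∀ u ∈ G.neighborFinset v, G.degree u + c ≤ card V) (hv : G.degree v + 4 ≤ card V + c) :
    G.degree v ^ 2 + ∑ u ∈ G.neighborFinset v, G.degree u + 4 * G.degree v ≤
      2 * card V * G.degree v := by
  have hS : ∑ u ∈ G.neighborFinset v, (G.degree u + c) ≤ card V * G.degree v := by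
    rw [← card_neighborFinset_eq_degree, mul_comm, ← smul_eq_mul, ← sum_const]
    exact sum_le_sum hc
  rw [sum_add_distrib, sum_const, card_neighborFinset_eq_degree, smul_eq_mul] at hS
  nlinarith

lemma degree_add_sum_degree_add_le (hsparse : card V ≤ #Gᶜ.edgeFinset + 2) {v : V}
    {s : Finset V} (hs : Disjoint s (insert v (G.neighborFinset v))) :
    G.degree v + ∑ u ∈ G.neighborFinset v, G.degree u + ∑ u ∈ s, G.degree u + 3 * card V ≤
      card V * card V + 4 := by
  have hsum : G.degree v + ∑ u ∈ G.neighborFinset v, G.degree u + ∑ u ∈ s, G.degree u ≤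
      ∑ u, G.degree u := by
    rw [← sum_insert (f := fun u => G.degree u) (by simp), ← sum_union hs.symm]
    exact sum_le_univ_sum_of_nonneg fun _ => Nat.zero_le _
  have := sum_degree_add_two_mul_card_compl G
  omega

lemma degree_add_one_le_card_edgeFinset (H : SimpleGraph V) [DecidableRel H.Adj] {v x y : V}
    (h : H.Adj x y) (hx : x ≠ v) (hy : y ≠ v) : H.degree v + 1 ≤ #H.edgeFinset := by
  rw [← card_incidenceFinset_eq_degree, ← card_insert_of_notMem (a := s(x, y))]
  · exact card_le_card (insert_subset ((mem_edgeFinset).2 h) (H.incidenceFinset_subset v))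
  · simp [incidenceSet, hx.symm, hy.symm]

lemma exists_adj_ne_ne_of_three_le_degree {w : V} (hw : 3 ≤ G.degree w) (u v : V) :
    ∃ z, G.Adj w z ∧ z ≠ u ∧ z ≠ v := by
  have : 0 < #(((G.neighborFinset w).erase u).erase v) := by
    have := pred_card_le_card_erase (s := G.neighborFinset w) (a := u)
    have := pred_card_le_card_erase (s := (G.neighborFinset w).erase u) (a := v)
    rw [card_neighborFinset_eq_degree] at *
    omega
  obtain ⟨z, hz⟩ := card_pos.1 this
  simp only [mem_erase, mem_neighborFinset] at hz
  exact ⟨z, hz.2.2, hz.2.1, hz.1⟩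

end Degrees

section Threshold

variable {V : Type} [Fintype V] [DecidableEq V] (G : SimpleGraph V) [DecidableRel G.Adj]

noncomputable def qThreshold (n : ℕ) : ℝ := 2 * n - 4 + 2 / (n - 1)

lemma sq_add_le_qThreshold_mul_of_le {n d S : ℕ} (hn : 3 ≤ n)
    (h : d ^ 2 + S + 4 * d ≤ 2 * n * d) : (d : ℝ) ^ 2 + S ≤ qThreshold n * d := by
  have hnR : (3 : ℝ) ≤ n := by exact_mod_cast hn
  have hR : ((d ^ 2 + S + 4 * d : ℕ) : ℝ) ≤ ((2 * n * d : ℕ) : ℝ) := by exact_mod_cast h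
  have hfrac : 0 ≤ 2 * (d : ℝ) / (n - 1) := div_nonneg (by positivity) (by linarith)
  push_cast at hR
  rw [qThreshold, add_mul, div_mul_eq_mul_div]
  nlinarith

lemma sq_add_le_qThreshold_mul_of_add_le {n d S e : ℕ} (hn : 3 ≤ n) (he : e ≤ 1)
    (hd : d + e + 1 = n) (h : d + S + e + 3 * n ≤ n * n + 4) :
    (d : ℝ) ^ 2 + S ≤ qThreshold n * d := by
  have hnR : (3 : ℝ) ≤ n := by exact_mod_cast hn
  have hR : ((d + S + e + 3 * n : ℕ) : ℝ) ≤ ((n * n + 4 : ℕ) : ℝ) := by exact_mod_cast h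
  have hdR : (d : ℝ) = n - 1 - e := by rw [← hd]; push_cast; ring
  have hθ : qThreshold n * d = (2 * n - 4) * (n - 1 - e) + 2 - 2 * e / (n - 1) := by
    have : (n : ℝ) - 1 ≠ 0 := by linarith
    rw [qThreshold, hdR]; field_simp; ring
  have he₀ : (0 : ℝ) ≤ e := Nat.cast_nonneg e
  have he₂ : (e : ℝ) ^ 2 = e := by interval_cases e <;> norm_num
  have hfrac : 2 * (e : ℝ) / (n - 1) ≤ e := by
    rw [div_le_iff₀ (by linarith)]; nlinarith
  push_cast at hR
  rw [hθ, hdR]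
  rw [hdR] at hR
  nlinarith

lemma sq_degree_add_sum_degree_le (hn : 3 ≤ card V) (hsparse : card V ≤ #Gᶜ.edgeFinset + 2)
    (v : V) :
    (G.degree v : ℝ) ^ 2 + ∑ u ∈ G.neighborFinset v, (G.degree u : ℝ) ≤
      qThreshold (card V) * G.degree v := by
  have hv := degree_add_compl_degree G v
  rw [← Nat.cast_sum]
  rcases (show G.degree v + 3 ≤ card V ∨ G.degree v + 1 = card V ∨ G.degree v + 2 = card V by
    omega) with hd | hd | hd
  · exact sq_add_le_qThreshold_mul_of_le hn <| sq_degree_add_sum_degree_add_le G (c := 1)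
      (fun u _ => by have := degree_add_compl_degree G u; omega) (by omega)
  · exact sq_add_le_qThreshold_mul_of_add_le hn (e := 0) zero_le_one (by omega) <| by
      simpa using degree_add_sum_degree_add_le G hsparse (v := v) (s := ∅) (by simp)
  obtain ⟨w, hw⟩ := card_eq_one.1 ((card_neighborFinset_eq_degree Gᶜ v).trans (by omega))
  have hvw : Gᶜ.Adj v w := (mem_neighborFinset _ _ _).1 (hw ▸ mem_singleton_self w)
  rw [compl_adj] at hvw
  rcases Nat.eq_zero_or_pos (G.degree w) with hw₀ | hw₀
  · -- `w` is isolated, so it is a non-neighbour of every neighbour of `v`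
    refine sq_add_le_qThreshold_mul_of_le hn <| sq_degree_add_sum_degree_add_le G (c := 2)
      (fun u hu => ?_) (by omega)
    rw [mem_neighborFinset] at hu
    have hcu : 0 < Gᶜ.degree u := (Gᶜ.degree_pos_iff_exists_adj u).2 ⟨w, (compl_adj _ _ _).2
      ⟨fun h => hvw.2 (h ▸ hu), fun h => (G.degree_pos_iff_exists_adj w).2 ⟨u, h.symm⟩ |>.ne' hw₀⟩⟩
    have := degree_add_compl_degree G u
    omega
  · have h := degree_add_sum_degree_add_le G hsparse (v := v) (s := {w}) (by
      simp only [disjoint_singleton_left, mem_insert, mem_neighborFinset, not_or]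
      exact ⟨fun h => hvw.1 h.symm, hvw.2⟩)
    rw [sum_singleton] at h
    exact sq_add_le_qThreshold_mul_of_add_le hn (e := 1) le_rfl (by omega) (by omega)

lemma qThreshold_nonneg {n : ℕ} (hn : 3 ≤ n) : 0 ≤ qThreshold n := by
  have hnR : (3 : ℝ) ≤ n := by exact_mod_cast hn
  have : 0 ≤ 2 / ((n : ℝ) - 1) := div_nonneg zero_le_two (by linarith)
  rw [qThreshold]; linarith

lemma qRad_le_qThreshold (hn : 3 ≤ card V) (hsparse : card V ≤ #Gᶜ.edgeFinset + 2) :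
    qRad G ≤ qThreshold (card V) := by
  refine maxEig_le (qThreshold_nonneg hn) fun t x hx h => ?_
  rcases le_or_gt t 0 with ht | ht
  · exact ht.trans (qThreshold_nonneg hn)
  obtain ⟨v, hv, hle⟩ := exists_mul_degree_le_of_qMat_mulVec G ht hx h
  exact le_of_mul_le_mul_right (hle.trans (sq_degree_add_sum_degree_le G hn hsparse v))
    (Nat.cast_pos.2 hv)

end Threshold

section Model

instance (n s a : ℕ) : DecidableRel (modelA n s a).Adj := fun i j =>
  inferInstanceAs <| Decidable <|
    i ≠ j ∧ ((i : ℕ) < s ∨ (j : ℕ) < s ∨ (s + a ≤ (i : ℕ) ∧ s + a ≤ (j : ℕ)))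

variable {n : ℕ}

lemma modelA_neighborFinset_of_lt_two {i : Fin n} (hi : (i : ℕ) < 2) :
    (modelA n 2 1).neighborFinset i = univ.erase i := by
  ext j; rw [mem_neighborFinset]; simp [modelA, eq_comm]; omega

lemma modelA_neighborFinset_of_eq_two (hn : 3 ≤ n) {i : Fin n} (hi : (i : ℕ) = 2) :
    (modelA n 2 1).neighborFinset i = {⟨0, by omega⟩, ⟨1, by omega⟩} := by
  ext j; rw [mem_neighborFinset]; simp [modelA, hi, Fin.ext_iff]; omega

lemma modelA_neighborFinset_of_three_le (hn : 3 ≤ n) {i : Fin n} (hi : 3 ≤ (i : ℕ)) :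
    (modelA n 2 1).neighborFinset i = (univ.erase i).erase ⟨2, by omega⟩ := by
  ext j; rw [mem_neighborFinset]; simp [modelA, Fin.ext_iff]; omega

def modelAVec (b c : ℝ) (j : Fin n) : ℝ := if (j : ℕ) < 2 then 1 else if (j : ℕ) = 2 then b else c

lemma sum_modelAVec (hn : 3 ≤ n) (b c : ℝ) :
    ∑ j : Fin n, modelAVec b c j = 2 + b + (n - 3) * c := by
  obtain ⟨m, rfl⟩ : ∃ m, n = m + 3 := ⟨n - 3, by omega⟩
  simp [Fin.sum_univ_succ, modelAVec]
  ring

lemma qMat_modelA_mulVec (hn : 3 ≤ n) {t b c : ℝ} (hb : b * (t - 2) = 2)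
    (hc : c * (t - (2 * n - 6)) = 2) (hbc : b + (n - 3) * c = t - n) :
    qMat (modelA n 2 1) *ᵥ modelAVec b c = t • modelAVec b c := by
  have hsum := sum_modelAVec hn b c
  funext i
  rw [qMat_mulVec_apply, ← card_neighborFinset_eq_degree, Pi.smul_apply, smul_eq_mul]
  rcases lt_trichotomy (i : ℕ) 2 with hi | hi | hi
  · rw [modelA_neighborFinset_of_lt_two hi, sum_erase_eq_sub (mem_univ _), hsum,
      card_erase_of_mem (mem_univ _), card_univ, Fintype.card_fin, Nat.cast_sub (by omega)]
    simp only [modelAVec, if_pos hi]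
    push_cast; linarith
  · rw [modelA_neighborFinset_of_eq_two hn hi, sum_pair (by simp [Fin.ext_iff]),
      card_pair (by simp [Fin.ext_iff])]
    simp only [modelAVec, hi]
    norm_num; linarith
  · have h2 : (⟨2, by omega⟩ : Fin n) ∈ univ.erase i := by simp [Fin.ext_iff]; omega
    rw [modelA_neighborFinset_of_three_le hn hi, sum_erase_eq_sub h2, sum_erase_eq_sub (mem_univ _),
      hsum, card_erase_of_mem h2, card_erase_of_mem (mem_univ _), card_univ, Fintype.card_fin,
      Nat.cast_sub (by omega), Nat.cast_sub (by omega)]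
    simp only [modelAVec, if_neg (by omega : ¬ (i : ℕ) < 2), if_neg (by omega : (i : ℕ) ≠ 2)]
    norm_num; linarith

-- Eliminating `b` and `c` from the hypotheses of `qMat_modelA_mulVec` leaves this cubic in `t`.
lemma exists_root_gt_qThreshold (hn : 3 ≤ n) :
    ∃ t : ℝ, qThreshold n < t ∧
      (t - n) * (t - 2) * (t - (2 * n - 6)) = 2 * (t - (2 * n - 6)) + 2 * (n - 3) * (t - 2) := by
  set g : ℝ → ℝ := fun t =>
    (t - n) * (t - 2) * (t - (2 * n - 6)) - (2 * (t - (2 * n - 6)) + 2 * (n - 3) * (t - 2))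
  have hnR : (3 : ℝ) ≤ n := by exact_mod_cast hn
  set e : ℝ := 2 / (n - 1)
  have he : e * (n - 1) = 2 := div_mul_cancel₀ _ (by linarith)
  have he0 : 0 < e := div_pos two_pos (by linarith)
  have he1 : e ≤ 1 := by rw [div_le_one (by linarith)]; linarith
  have hθ : qThreshold n = 2 * n - 4 + e := rfl
  have hgθ : g (qThreshold n) < 0 := by
    have : g (qThreshold n) = -8 + 6 * e - 5 * e ^ 2 + e ^ 3 := by
      simp only [g, hθ]; linear_combination (2 * (n : ℝ) - 8 + 3 * e) * he
    rw [this]; nlinarith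
  have hg2n : 0 ≤ g (2 * n) := by simp only [g]; nlinarith
  obtain ⟨t, ⟨htθ, -⟩, hgt⟩ := intermediate_value_Ioc (by rw [hθ]; linarith)
    (by fun_prop : Continuous g).continuousOn ⟨hgθ, hg2n⟩
  exact ⟨t, htθ, sub_eq_zero.1 hgt⟩

lemma qThreshold_lt_qRad_modelA (hn : 3 ≤ n) : qThreshold n < qRad (modelA n 2 1) := by
  obtain ⟨t, htθ, hroot⟩ := exists_root_gt_qThreshold hn
  have hnR : (3 : ℝ) ≤ n := by exact_mod_cast hn
  have ht : 2 * (n : ℝ) - 4 < t := lt_of_le_of_lt (by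
    rw [qThreshold]; linarith [div_nonneg zero_le_two (by linarith : (0 : ℝ) ≤ n - 1)]) htθ
  have ht₁ : t - 2 ≠ 0 := by nlinarith
  have ht₂ : t - (2 * n - 6) ≠ 0 := by nlinarith
  have hb : 2 / (t - 2) * (t - 2) = 2 := div_mul_cancel₀ _ ht₁
  have hc : 2 / (t - (2 * n - 6)) * (t - (2 * n - 6)) = 2 := div_mul_cancel₀ _ ht₂
  have hbc : 2 / (t - 2) + (n - 3) * (2 / (t - (2 * n - 6))) = t - n := by
    field_simp; linear_combination -hroot
  refine htθ.trans_le (le_maxEig (x := modelAVec (2 / (t - 2)) (2 / (t - (2 * n - 6)))) ?_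
    (qMat_modelA_mulVec hn hb hc hbc))
  exact Function.ne_iff.2 ⟨⟨0, by omega⟩, by simp [modelAVec]⟩

end Model

section Matching

variable {V : Type} [DecidableEq V]

def IsPerfectMatchingOn (G : SimpleGraph V) (s : Finset V) (M : Finset (Sym2 V)) : Prop :=
  IsMatchingIn G M ∧ ∀ v, v ∈ s ↔ ∃ e ∈ M, v ∈ e

lemma IsPerfectMatchingOn.insert_edge {G : SimpleGraph V} {s : Finset V}
    {M : Finset (Sym2 V)} {u w : V} (hM : IsPerfectMatchingOn G s M) (hu : u ∉ s) (hw : w ∉ s)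
    (h : G.Adj u w) :
    IsPerfectMatchingOn G (insert u (insert w s)) (insert s(u, w) M) := by
  obtain ⟨⟨hMG, hMdisj⟩, hMs⟩ := hM
  have hfresh : ∀ f ∈ M, ∀ x ∈ s(u, w), x ∉ f := by
    rintro f hf x hx hxf
    rcases Sym2.mem_iff.1 hx with rfl | rfl
    exacts [hu ((hMs x).2 ⟨f, hf, hxf⟩), hw ((hMs x).2 ⟨f, hf, hxf⟩)]
  refine ⟨⟨?_, ?_⟩, fun v => ?_⟩
  · rw [coe_insert, Set.insert_subset_iff]; exact ⟨h, hMG⟩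
  · simp only [mem_insert]
    rintro e (rfl | he) f (rfl | hf) hef x ⟨hxe, hxf⟩
    exacts [hef rfl, hfresh f hf x hxe hxf, hfresh e he x hxf hxe,
      hMdisj e he f hf hef x ⟨hxe, hxf⟩]
  · simp only [mem_insert, exists_eq_or_imp, Sym2.mem_iff, hMs, or_assoc]

variable (G : SimpleGraph V) [DecidableRel G.Adj]

def coDeg (s : Finset V) (v : V) : ℕ := #{w ∈ s | Gᶜ.Adj v w}

/-- Twice the number of non-edges of `G` inside `s`. -/
def coDegSum (s : Finset V) : ℕ := ∑ v ∈ s, coDeg G s v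

variable {G}

lemma coDeg_mono {s t : Finset V} (h : t ⊆ s) (v : V) : coDeg G t v ≤ coDeg G s v :=
  card_le_card (filter_subset_filter _ h)

lemma coDegSum_mono {s t : Finset V} (h : t ⊆ s) : coDegSum G t ≤ coDegSum G s :=
  (sum_le_sum fun v _ => coDeg_mono h v).trans
    (sum_le_sum_of_subset_of_nonneg h fun _ _ _ => Nat.zero_le _)

lemma coDeg_erase_of_adj {s : Finset V} {u w : V} (h : G.Adj u w) :
    coDeg G (s.erase u) w = coDeg G s w := by
  rw [coDeg, coDeg, filter_erase, erase_eq_of_notMem]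
  simp [compl_adj, h.symm]

lemma filter_erase_compl_adj (s : Finset V) (u : V) :
    {v ∈ s.erase u | Gᶜ.Adj v u} = {v ∈ s | Gᶜ.Adj u v} := by
  ext v
  simp only [mem_filter, mem_erase, compl_adj, G.adj_comm v u]
  grind

lemma coDegSum_eq_two_mul_coDeg_add {s : Finset V} {u : V} (hu : u ∈ s) :
    coDegSum G s = 2 * coDeg G s u + coDegSum G (s.erase u) := by
  have hsplit (v : V) : coDeg G s v = coDeg G (s.erase u) v + if Gᶜ.Adj v u then 1 else 0 := by
    rw [coDeg, coDeg, filter_erase]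
    split_ifs with h
    · rw [card_erase_add_one (mem_filter.2 ⟨hu, h⟩)]
    · rw [erase_eq_of_notMem (fun h' => h (mem_filter.1 h').2), add_zero]
  rw [coDegSum, ← add_sum_erase _ _ hu, sum_congr rfl fun v _ => hsplit v, sum_add_distrib,
    ← card_filter, filter_erase_compl_adj, coDegSum]
  rw [coDeg]; ring

lemma two_mul_coDeg_le {s : Finset V} {v : V} (hv : v ∈ s) : 2 * coDeg G s v ≤ coDegSum G s := by
  rw [coDegSum_eq_two_mul_coDeg_add hv]; exact Nat.le_add_right _ _

lemma coDegSum_eq_of_adj {s : Finset V} {u w : V} (hu : u ∈ s) (hw : w ∈ s) (h : G.Adj u w) :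
    coDegSum G s = 2 * coDeg G s u + 2 * coDeg G s w + coDegSum G ((s.erase u).erase w) := by
  rw [coDegSum_eq_two_mul_coDeg_add hu, coDegSum_eq_two_mul_coDeg_add (mem_erase.2 ⟨h.ne', hw⟩),
    coDeg_erase_of_adj h, add_assoc]

lemma coDegSum_le_card_mul {s : Finset V} {m : ℕ} (h : ∀ v ∈ s, coDeg G s v ≤ m) :
    coDegSum G s ≤ #s * m := by
  rw [← smul_eq_mul]; exact sum_le_card_nsmul _ _ _ h

lemma filter_erase_not_adj (s : Finset V) (u : V) :
    {v ∈ s.erase u | ¬G.Adj u v} = {v ∈ s | Gᶜ.Adj u v} := by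
  ext v; simp only [mem_filter, mem_erase, compl_adj]; tauto

lemma filter_erase_adj (s : Finset V) (u : V) :
    {v ∈ s.erase u | G.Adj u v} = {v ∈ s | G.Adj u v} := by
  ext v; simp only [mem_filter, mem_erase]
  exact ⟨fun h => ⟨h.1.2, h.2⟩, fun h => ⟨⟨h.2.ne', h.1⟩, h.2⟩⟩

lemma card_eq_coDeg_add_card_adj {s : Finset V} {u : V} (hu : u ∈ s) :
    #s = coDeg G s u + #{v ∈ s | G.Adj u v} + 1 := by
  rw [← card_erase_add_one hu, ← card_filter_add_card_filter_not (s := s.erase u) (G.Adj u),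
    filter_erase_adj, filter_erase_not_adj, coDeg, add_comm (#_)]

lemma coDegSum_le_of_isMax {s : Finset V} {u w : V} (hu : u ∈ s)
    (hmax : ∀ v ∈ s, coDeg G s v ≤ coDeg G s u)
    (hmax' : ∀ v ∈ s, G.Adj u v → coDeg G s v ≤ coDeg G s w) :
    coDegSum G s ≤ coDeg G s u + coDeg G s u ^ 2 + #{v ∈ s | G.Adj u v} * coDeg G s w := by
  rw [coDegSum, ← add_sum_erase _ _ hu, ← sum_filter_add_sum_filter_not (s.erase u) (G.Adj u),
    filter_erase_adj, filter_erase_not_adj, sq, add_assoc, add_comm (∑ v ∈ _ with _, _)]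
  gcongr
  · change _ ≤ coDeg G s u * _
    rw [coDeg, ← smul_eq_mul]
    exact sum_le_card_nsmul _ _ _ fun v hv => hmax v (mem_filter.1 hv).1
  · rw [← smul_eq_mul]
    exact sum_le_card_nsmul _ _ _ fun v hv => hmax' v (mem_filter.1 hv).1 (mem_filter.1 hv).2

/-- The bound on `coDegSum` preserved by the greedy matching; for `k ≤ 2` it is `0` because
subtraction on `ℕ` truncates. -/
def nonEdgeBound (k : ℕ) : ℕ := if 6 ≤ k then 2 * k - 2 else 2 * k - 4

lemma le_nonEdgeBound_sub_two {k D d E E' : ℕ} (hk : Even k) (hD : D + 2 ≤ k)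
    (hd : d ≤ D) (hE : E = 2 * D + 2 * d + E') (hmax : E ≤ k * D)
    (hsplit : E ≤ D + D ^ 2 + (k - 1 - D) * d) (hbound : E ≤ nonEdgeBound k) :
    E' ≤ nonEdgeBound (k - 2) := by
  unfold nonEdgeBound at *
  obtain ⟨r, rfl⟩ := hk
  rcases (by omega : r = 1 ∨ r = 2 ∨ r = 3 ∨ 4 ≤ r) with rfl | rfl | rfl | hr
  · omega
  · have : D ≤ 2 := by omega
    interval_cases D <;> norm_num at * <;> omega
  · have : D ≤ 4 := by omega
    interval_cases D <;> norm_num at * <;> omega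
  · rw [if_pos (by omega)] at hbound; rw [if_pos (by omega)]
    rcases Nat.lt_or_ge D 2 with hD₂ | hD₂
    · interval_cases D <;> simp only [mul_zero, mul_one] at hmax <;> omega
    · omega

variable (G) in
def FewNonEdgesOn (s : Finset V) : Prop :=
  coDegSum G s ≤ nonEdgeBound #s ∧ (6 ≤ #s → ∀ v ∈ s, coDeg G s v + 2 ≤ #s)

/-- Greedy step: match a vertex `u` with the most non-neighbours to the neighbour `w` of `u`
with the most non-neighbours. -/
lemma exists_adj_fewNonEdgesOn_erase {s : Finset V} (hs : Even #s) (hs₂ : 2 ≤ #s)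
    (h : FewNonEdgesOn G s) :
    ∃ u ∈ s, ∃ w ∈ s, G.Adj u w ∧ FewNonEdgesOn G ((s.erase u).erase w) := by
  obtain ⟨u, hu, hmax⟩ := exists_max_image s (coDeg G s) (card_pos.1 (by omega))
  have hcard := card_eq_coDeg_add_card_adj (G := G) hu
  have hu₂ : coDeg G s u + 2 ≤ #s := by
    by_cases h6 : 6 ≤ #s
    · exact h.2 h6 u hu
    · have := two_mul_coDeg_le (G := G) hu
      have := h.1; rw [nonEdgeBound, if_neg h6] at this; omega
  obtain ⟨w, hwA, hmax'⟩ := exists_max_image {v ∈ s | G.Adj u v} (coDeg G s)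
    (card_pos.1 (by omega))
  obtain ⟨hw, huw⟩ := mem_filter.1 hwA
  refine ⟨u, hu, w, hw, huw, ?_⟩
  have hs' : #((s.erase u).erase w) = #s - 2 := by
    rw [card_erase_of_mem (mem_erase.2 ⟨huw.ne', hw⟩), card_erase_of_mem hu]; omega
  have hE := coDegSum_eq_of_adj hu hw huw
  rw [FewNonEdgesOn, hs']
  refine ⟨le_nonEdgeBound_sub_two hs hu₂ (hmax w hw) hE (coDegSum_le_card_mul hmax)
    ?_ h.1, fun h6 z hz => ?_⟩
  · have := coDegSum_le_of_isMax hu hmax fun v hv hv' => hmax' v (mem_filter.2 ⟨hv, hv'⟩)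
    rwa [show #{v ∈ s | G.Adj u v} = #s - 1 - coDeg G s u by omega] at this
  · -- otherwise `u` and `z` together would carry too many non-edges
    have := two_mul_coDeg_le (G := G) hz
    have := coDeg_mono (G := G) ((erase_subset w _).trans (erase_subset u s)) z
    have := hmax z (mem_of_mem_erase (mem_of_mem_erase hz))
    have := h.1
    rw [nonEdgeBound, if_pos (by omega)] at this
    omega

lemma exists_isPerfectMatchingOn {s : Finset V} (hs : Even #s) (h : FewNonEdgesOn G s) :
    ∃ M, IsPerfectMatchingOn G s M := by
  induction hk : #s using Nat.strong_induction_on generalizing s with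
  | _ k ih =>
  rcases Nat.lt_or_ge #s 2 with hs₂ | hs₂
  · obtain rfl : s = ∅ := card_eq_zero.1 (by rcases hs with ⟨r, hr⟩; omega)
    exact ⟨∅, ⟨by simp, by simp⟩, by simp⟩
  obtain ⟨u, hu, w, hw, huw, h'⟩ := exists_adj_fewNonEdgesOn_erase hs hs₂ h
  have hw' : w ∈ s.erase u := mem_erase.2 ⟨huw.ne', hw⟩
  have hcard : #((s.erase u).erase w) + 2 = #s := by
    rw [card_erase_of_mem hw', card_erase_of_mem hu]; omega
  obtain ⟨M, hM⟩ := ih _ (by omega) (by rw [← hcard] at hs; simpa [parity_simps] using hs) h' rfl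
  have := hM.insert_edge (fun h => notMem_erase u s (mem_of_mem_erase h)) (notMem_erase w _) huw
  rw [insert_erase hw', insert_erase hu] at this
  exact ⟨_, this⟩

variable [Fintype V]

lemma coDegSum_univ : coDegSum G univ = 2 * #Gᶜ.edgeFinset := by
  rw [← sum_degrees_eq_twice_card_edges, coDegSum]
  exact sum_congr rfl fun v _ => by
    rw [← card_neighborFinset_eq_degree, neighborFinset_eq_filter, coDeg]

lemma exists_isPerfectMatchingOn_univ_mem (hn : 8 ≤ card V) (heven : Even (card V))
    (hsparse : #Gᶜ.edgeFinset + 3 ≤ card V) {u v : V} (huv : G.Adj u v)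
    (hnbr : ∀ w, w ≠ u → w ≠ v → ∃ z, G.Adj w z ∧ z ≠ u ∧ z ≠ v) :
    ∃ M, IsPerfectMatchingOn G univ M ∧ s(u, v) ∈ M := by
  have hv : v ∈ univ.erase u := mem_erase.2 ⟨huv.ne', mem_univ _⟩
  have hcard : #((univ.erase u).erase v) + 2 = card V := by
    rw [card_erase_of_mem hv, card_erase_of_mem (mem_univ _), card_univ]; omega
  have hfew : FewNonEdgesOn G ((univ.erase u).erase v) := by
    refine ⟨?_, fun _ w hw => ?_⟩
    · have := coDegSum_mono (G := G) (subset_univ ((univ.erase u).erase v))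
      rw [coDegSum_univ] at this
      rw [nonEdgeBound, if_pos (by omega)]; omega
    · obtain ⟨z, hwz, hzu, hzv⟩ :=
        hnbr w (ne_of_mem_erase (mem_of_mem_erase hw)) (ne_of_mem_erase hw)
      have hz : z ∈ {x ∈ (univ.erase u).erase v | G.Adj w x} :=
        mem_filter.2 ⟨mem_erase.2 ⟨hzv, mem_erase.2 ⟨hzu, mem_univ _⟩⟩, hwz⟩
      have := card_pos.2 ⟨z, hz⟩
      have := card_eq_coDeg_add_card_adj (G := G) hw
      omega
  obtain ⟨M, hM⟩ := exists_isPerfectMatchingOn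
    (by rw [← hcard] at heven; simpa [parity_simps] using heven) hfew
  have := hM.insert_edge (fun h => notMem_erase u _ (mem_of_mem_erase h)) (notMem_erase v _) huv
  rw [insert_erase hv, insert_erase (mem_univ u)] at this
  exact ⟨_, this, mem_insert_self _ _⟩

end Matching

section Extremal

variable {V : Type} [Fintype V] [DecidableEq V]

lemma exists_equiv_fin_of_ne {n : ℕ} (hn : card V = n) {a b c : V} (hab : a ≠ b) (hac : a ≠ c)
    (hbc : b ≠ c) : ∃ e : V ≃ Fin n, (e a : ℕ) = 0 ∧ (e b : ℕ) = 1 ∧ (e c : ℕ) = 2 := by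
  have h3 : 3 ≤ n := hn ▸ (card_le_univ {a, b, c}).trans_eq' (by simp [*])
  let f : V → Fin n := fun z => if z = a then ⟨0, by omega⟩ else if z = b then ⟨1, by omega⟩
    else ⟨2, by omega⟩
  obtain ⟨g, hg⟩ := Finset.exists_equiv_extend_of_card_eq (t := univ) (s := {a, b, c}) (f := f)
    (by simp [hn]) (subset_univ _) (by
      intro x hx y hy hxy
      simp only [coe_insert, coe_singleton, Set.mem_insert_iff, Set.mem_singleton_iff] at hx hy
      rcases hx with rfl | rfl | rfl <;> rcases hy with rfl | rfl | rfl <;>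
        simp_all [f, Fin.ext_iff, eq_comm])
  refine ⟨g.trans (Equiv.subtypeUnivEquiv mem_univ), ?_, ?_, ?_⟩ <;>
    simp [hg, f, hab, hac, hbc, hab.symm, hac.symm, hbc.symm]

variable {G : SimpleGraph V} [DecidableRel G.Adj]

lemma adj_of_degree_le_two (hsparse : #Gᶜ.edgeFinset + 3 ≤ card V) {v x y : V}
    (hv : G.degree v ≤ 2) (hxy : x ≠ y) (hx : x ≠ v) (hy : y ≠ v) : G.Adj x y := by
  by_contra h
  have := degree_add_one_le_card_edgeFinset Gᶜ ((compl_adj _ _ _).2 ⟨hxy, h⟩) hx hy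
  have := degree_add_compl_degree G v
  omega

lemma nonempty_iso_modelA {n : ℕ} (hn : card V = n) (hsparse : #Gᶜ.edgeFinset + 3 ≤ n) {v : V}
    (hv : G.degree v ≤ 2) : Nonempty (G ≃g modelA n 2 1) := by
  have hv₂ : G.degree v = 2 := by
    have := degree_add_compl_degree G v
    have := Gᶜ.degree_le_card_edgeFinset v
    omega
  obtain ⟨a, b, hab, hN⟩ := card_eq_two.1 ((card_neighborFinset_eq_degree G v).trans hv₂)
  have hadj (z : V) : G.Adj v z ↔ z = a ∨ z = b := by
    rw [← mem_neighborFinset, hN, mem_insert, mem_singleton]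
  have hva : v ≠ a := fun h => G.loopless.irrefl v ((hadj v).2 (Or.inl h))
  have hvb : v ≠ b := fun h => G.loopless.irrefl v ((hadj v).2 (Or.inr h))
  obtain ⟨e, ha, hb, hv'⟩ := exists_equiv_fin_of_ne hn hab hva.symm hvb.symm
  have hlt (z : V) : (e z : ℕ) < 2 ↔ z = a ∨ z = b := by
    rw [← e.injective.eq_iff, ← e.injective.eq_iff (b := b), Fin.ext_iff, Fin.ext_iff, ha, hb]
    omega
  have hge (z : V) : 3 ≤ (e z : ℕ) ↔ ¬(z = a ∨ z = b) ∧ z ≠ v := by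
    rw [← hlt, ← e.injective.ne_iff, Fin.ext_iff.ne, hv']
    omega
  refine ⟨⟨e, fun {x y} => ?_⟩⟩
  change e x ≠ e y ∧ _ ↔ _
  rw [e.injective.ne_iff, hlt, hlt, hge, hge]
  constructor
  · rintro ⟨hxy, h⟩
    by_cases hx : x = v
    · subst hx; exact (hadj y).2 (by tauto)
    by_cases hy : y = v
    · subst hy; exact ((hadj x).2 (by tauto)).symm
    exact adj_of_degree_le_two (hn ▸ hsparse) hv hxy hx hy
  · intro h
    refine ⟨h.ne, ?_⟩
    by_cases hx : x = v
    · subst hx; have := (hadj y).1 h; tauto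
    by_cases hy : y = v
    · subst hy; have := (hadj x).1 h.symm; tauto
    tauto

end Extremal

lemma card_compl_edgeFinset_add_three_le {n : ℕ} (hn : 3 ≤ n) (G : SimpleGraph (Fin n))
    [DecidableRel G.Adj] (hq : qRad (modelA n 2 1) ≤ qRad G) : #Gᶜ.edgeFinset + 3 ≤ n := by
  by_contra h
  have hG := qRad_le_qThreshold G (by simpa using hn) (by simp only [Fintype.card_fin]; omega)
  rw [Fintype.card_fin] at hG
  linarith [qThreshold_lt_qRad_modelA hn]

/-- Corollary: Let `G` be a graph of even order `n ≥ 7`.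
If `q(G) ≥ q(K_2 ∨ (K_1 ∪ K_{n-3}))`, then `G` has a perfect matching containing any
given edge, unless `G ≅ K_2 ∨ (K_1 ∪ K_{n-3})`. -/
theorem stmt_5 (n : ℕ) (hn : 7 ≤ n) (hpar : n % 2 = 0)
    (G : SimpleGraph (Fin n))
    (hq : qRad (modelA n 2 1) ≤ qRad G) :
    Nonempty (G ≃g modelA n 2 1) ∨
      ∀ u v : Fin n, G.Adj u v →
        ∃ M : Finset (Sym2 (Fin n)),
          IsMatchingIn G M ∧ (∀ w : Fin n, ∃ e ∈ M, w ∈ e) ∧ s(u, v) ∈ M := by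
  classical
  have hsparse := card_compl_edgeFinset_add_three_le (by omega) G hq
  by_cases hdeg : ∃ v, G.degree v ≤ 2
  · obtain ⟨v, hv⟩ := hdeg
    exact Or.inl (nonempty_iso_modelA (Fintype.card_fin n) hsparse hv)
  push Not at hdeg
  refine Or.inr fun u v huv => ?_
  obtain ⟨M, ⟨hM, hcover⟩, huvM⟩ := exists_isPerfectMatchingOn_univ_mem
    (by simp only [Fintype.card_fin]; omega) (by simpa [Nat.even_iff] using hpar)
    (by simpa using hsparse) huv fun w _ _ => exists_adj_ne_ne_of_three_le_degree G (hdeg w) u v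
  exact ⟨M, hM, fun w => (hcover w).1 (mem_univ w), huvM⟩
end

section
/- Let $n, s, k$ be positive integers with $k \ge 2$, $s \ge 1$, $n \ge \tfrac{3}{2}k + 5$ and $n \ge (k+1)s + 1$. If $s > 1$, then the spectral radius of the graph $sK_1 \vee ((ks+1)K_1 \cup K_{n-(k+1)s-1})$ is strictly less than the spectral radius of the graph $K_1 \vee ((k+1)K_1 \cup K_{n-k-2})$ (the $s=1$ member of this family). -/
/-!
The graph `sK₁ ∨ ((ks+1)K₁ ∪ K_{n-(k+1)s-1})` carries a positive vector `w`, constant on the three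
blocks, with `A w ≤ (n-k-2) w` entrywise; by the Collatz–Wielandt bound its spectral radius is at most
`n - k - 2`. On the other hand `K₁ ∨ ((k+1)K₁ ∪ K_{n-k-2})` has a block-constant eigenvector whose
eigenvalue is the largest root of the characteristic cubic of its quotient matrix, and that root
exceeds `n - k - 2`.
-/

open Matrix

section CollatzWielandt

variable {ι : Type} [Fintype ι] {M : Matrix ι ι ℝ}

theorem abs_le_of_mulVec_eq_smul (hM : ∀ i j, 0 ≤ M i j) {w : ι → ℝ} (hw : ∀ i, 0 < w i)
    {C : ℝ} (hMw : ∀ i, (M *ᵥ w) i ≤ C * w i) {t : ℝ} {x : ι → ℝ} (hx : x ≠ 0)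
    (hMx : M *ᵥ x = t • x) : |t| ≤ C := by
  obtain ⟨i₀, hi₀⟩ := Function.ne_iff.mp hx
  have : Nonempty ι := ⟨i₀⟩
  -- test the eigenvalue equation at a coordinate where `|x i| / w i` is maximal
  obtain ⟨i, hi⟩ := Finite.exists_max fun j => |x j| / w j
  set r := |x i| / w i with hr_def
  have hr : 0 < r := (div_pos (abs_pos.2 hi₀) (hw i₀)).trans_le (hi i₀)
  have hxi : 0 < |x i| := (div_pos_iff_of_pos_right (hw i)).1 hr
  have hxw : ∀ j, |x j| ≤ r * w j := fun j => (div_le_iff₀ (hw j)).1 (hi j)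
  have key : |t| * |x i| ≤ C * |x i| := calc
    |t| * |x i| = |∑ j, M i j * x j| := by
      rw [← abs_mul, ← smul_eq_mul, ← Pi.smul_apply, ← hMx]; rfl
    _ ≤ ∑ j, M i j * |x j| := by
      refine (Finset.abs_sum_le_sum_abs _ _).trans_eq (Finset.sum_congr rfl fun j _ => ?_)
      rw [abs_mul, abs_of_nonneg (hM i j)]
    _ ≤ ∑ j, M i j * (r * w j) :=
      Finset.sum_le_sum fun j _ => mul_le_mul_of_nonneg_left (hxw j) (hM i j)
    _ = r * (M *ᵥ w) i := by
      simp only [mulVec, dotProduct, Finset.mul_sum]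
      exact Finset.sum_congr rfl fun j _ => by ring
    _ ≤ r * (C * w i) := mul_le_mul_of_nonneg_left (hMw i) hr.le
    _ = C * |x i| := by rw [hr_def]; field_simp [(hw i).ne']
  exact le_of_mul_le_mul_right key hxi

theorem maxEig_le_s11 (hM : ∀ i j, 0 ≤ M i j) {w : ι → ℝ} (hw : ∀ i, 0 < w i) {C : ℝ}
    (hMw : ∀ i, (M *ᵥ w) i ≤ C * w i) (hC : 0 ≤ C) : maxEig M ≤ C :=
  Real.sSup_le (fun _ ⟨_, hx, hMx⟩ => (le_abs_self _).trans
    (abs_le_of_mulVec_eq_smul hM hw hMw hx hMx)) hC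

theorem le_maxEig_s11 (hM : ∀ i j, 0 ≤ M i j) {t : ℝ} {x : ι → ℝ} (hx : x ≠ 0)
    (hMx : M *ᵥ x = t • x) : t ≤ maxEig M := by
  refine le_csSup ⟨∑ i, ∑ j, M i j, fun t' ⟨y, hy, hMy⟩ => (le_abs_self t').trans
    (abs_le_of_mulVec_eq_smul hM (w := 1) (fun _ => one_pos) (fun i => ?_) hy hMy)⟩ ⟨x, hx, hMx⟩
  simpa [mulVec, dotProduct] using
    Finset.single_le_sum (fun i _ => Finset.sum_nonneg fun j _ => hM i j) (Finset.mem_univ i)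

end CollatzWielandt

theorem adjMat_nonneg {V : Type} [Fintype V] (G : SimpleGraph V) (i j : V) :
    0 ≤ adjMat G i j := by
  unfold adjMat
  split_ifs <;> norm_num

def blockVec (n s a : ℕ) (u v c : ℝ) : Fin n → ℝ :=
  fun j => if (j : ℕ) < s then u else if (j : ℕ) < s + a then v else c

section BlockVec

variable {n s a : ℕ} {u v c : ℝ}

theorem sum_blockVec (hsa : s + a ≤ n) :
    ∑ j, blockVec n s a u v c j = s * u + a * v + ((n : ℝ) - s - a) * c := by
  set g : ℕ → ℝ := fun j => if j < s then u else if j < s + a then v else c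
  have hconst : ∀ (p q : ℕ) (y : ℝ), (∀ j, p ≤ j → j < q → g j = y) →
      ∑ j ∈ Finset.Ico p q, g j = ((q - p : ℕ) : ℝ) * y := fun p q y hy => by
    rw [Finset.sum_congr rfl fun j hj => hy j (Finset.mem_Ico.1 hj).1 (Finset.mem_Ico.1 hj).2,
      Finset.sum_const, Nat.card_Ico, nsmul_eq_mul]
  rw [show ∑ j, blockVec n s a u v c j = ∑ j : Fin n, g j from rfl,
    Fin.sum_univ_eq_sum_range g, Finset.range_eq_Ico,
    ← Finset.sum_Ico_consecutive g (Nat.zero_le (s + a)) hsa,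
    ← Finset.sum_Ico_consecutive g (Nat.zero_le s) (Nat.le_add_right s a),
    hconst 0 s u fun j _ hj => if_pos hj,
    hconst s (s + a) v fun j hj hj' => by simp only [g]; rw [if_neg (by omega), if_pos hj'],
    hconst (s + a) n c fun j hj _ => by simp only [g]; rw [if_neg (by omega), if_neg (by omega)],
    Nat.sub_zero, Nat.add_sub_cancel_left, Nat.cast_sub hsa]
  push_cast
  ring

theorem smul_blockVec (r : ℝ) :
    r • blockVec n s a u v c = blockVec n s a (r * u) (r * v) (r * c) := by
  ext j
  simp only [blockVec, Pi.smul_apply, smul_eq_mul]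
  split_ifs <;> rfl

/-- `modelB n s a` is an equitable partition into its three blocks; this is its quotient matrix
acting on block-constant vectors. -/
theorem adjMat_modelB_mulVec_blockVec (hsa : s + a ≤ n) :
    adjMat (modelB n s a) *ᵥ blockVec n s a u v c =
      blockVec n s a (a * v + ((n : ℝ) - s - a) * c) (s * u)
        (s * u + ((n : ℝ) - s - a - 1) * c) := by
  ext i
  -- on each block of rows, `A_ij x_j` is itself block-constant in `j` (up to the diagonal term)
  have hrow : ∀ u' v' c' d : ℝ, (∀ j, adjMat (modelB n s a) i j * blockVec n s a u v c j =
      blockVec n s a u' v' c' j - if j = i then d else 0) →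
      (adjMat (modelB n s a) *ᵥ blockVec n s a u v c) i =
        s * u' + a * v' + ((n : ℝ) - s - a) * c' - d :=
    fun u' v' c' d h => by
      rw [mulVec, dotProduct, Finset.sum_congr rfl fun j _ => h j, Finset.sum_sub_distrib,
        sum_blockVec hsa, Finset.sum_ite_eq' Finset.univ i, if_pos (Finset.mem_univ i)]
  simp only [blockVec] at hrow ⊢
  split_ifs with h₁ h₂ <;>
    [refine (hrow 0 v c 0 ?_).trans (by ring);
     refine (hrow u 0 0 0 ?_).trans (by ring);
     refine (hrow u 0 c c ?_).trans (by ring)] <;>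
  · intro j
    by_cases hadj : (modelB n s a).Adj i j <;>
      simp only [adjMat, hadj, if_true, if_false, one_mul, zero_mul] <;>
      simp only [modelB, ne_eq, Fin.ext_iff] at hadj ⊢ <;>
      split_ifs <;> first | ring1 | (exfalso; omega)

end BlockVec

theorem exists_root_gt_of_cubic {T K : ℝ} (hT : 0 ≤ T) (hK : 0 ≤ K) :
    ∃ μ, T < μ ∧ (μ ^ 2 - (K + 1)) * (μ - T + 1) = T * μ := by
  set f : ℝ → ℝ := fun X => (X ^ 2 - (K + 1)) * (X - T + 1) - T * X with hf
  have hfT : f T = -(K + 1) := by simp only [hf]; ring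
  have hfX : 0 ≤ f (T + K + 1) := by
    simp only [hf]
    nlinarith [mul_nonneg (add_nonneg hT hK) (add_nonneg hT hK)]
  obtain ⟨μ, hμ, hfμ⟩ := intermediate_value_Icc (by linarith : T ≤ T + K + 1)
    (by fun_prop : Continuous f).continuousOn ⟨by linarith, hfX⟩
  refine ⟨μ, hμ.1.lt_of_ne ?_, by simpa [hf, sub_eq_zero] using hfμ⟩
  rintro rfl
  linarith

theorem lt_specRad_modelB_one {n k : ℕ} (hkn : k + 2 ≤ n) :
    (n : ℝ) - k - 2 < specRad (modelB n 1 (k + 1)) := by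
  set T : ℝ := (n : ℝ) - k - 2 with hT
  have hT0 : 0 ≤ T := by rw [hT, sub_sub, sub_nonneg]; exact_mod_cast hkn
  -- `(μ (μ - T + 1), μ - T + 1, μ)` is the eigenvector of the quotient matrix for the root `μ`
  obtain ⟨μ, hμ, hroot⟩ := exists_root_gt_of_cubic hT0 (Nat.cast_nonneg k)
  refine hμ.trans_le (le_maxEig_s11 (adjMat_nonneg _)
    (x := blockVec n 1 (k + 1) (μ * (μ - T + 1)) (μ - T + 1) μ) ?_ ?_)
  · intro h
    have h0 := congrFun h ⟨0, by omega⟩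
    simp only [blockVec, zero_lt_one, if_true, Pi.zero_apply] at h0
    nlinarith
  · rw [adjMat_modelB_mulVec_blockVec (by omega), smul_blockVec]
    congr 1
    · push_cast; linear_combination -hroot
    · push_cast; ring
    · push_cast; ring

theorem specRad_modelB_le {n s k : ℕ} (hk : 2 ≤ k) (hs : 2 ≤ s) (h1 : 3 * k + 10 ≤ 2 * n)
    (h2 : (k + 1) * s + 1 ≤ n) : specRad (modelB n s (k * s + 1)) ≤ (n : ℝ) - k - 2 := by
  have hsa : s + (k * s + 1) ≤ n := by linarith [add_mul k 1 s]
  have hk0 : (0 : ℝ) ≤ k - 2 := by rw [sub_nonneg]; exact_mod_cast hk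
  have hs0 : (0 : ℝ) ≤ s - 2 := by rw [sub_nonneg]; exact_mod_cast hs
  have hq : (0 : ℝ) ≤ 2 * n - 3 * k - 10 := by
    rw [sub_sub, sub_nonneg]; exact_mod_cast h1
  have hm : (0 : ℝ) ≤ n - (k + 1) * s - 1 := by
    rw [sub_sub, sub_nonneg]; exact_mod_cast h2
  set T : ℝ := (n : ℝ) - k - 2 with hT
  have hT0 : 0 < T := by linarith
  have hclique : 2 * s + ((n : ℝ) - s - (k * s + 1) - 1) ≤ T := by
    nlinarith [mul_nonneg hk0 hs0]
  refine maxEig_le_s11 (adjMat_nonneg _) (w := blockVec n s (k * s + 1) (2 * T) (2 * s) T)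
    (fun j => ?_) (fun i => ?_) hT0.le
  · simp only [blockVec]
    split_ifs <;> positivity
  · rw [adjMat_modelB_mulVec_blockVec hsa]
    simp only [blockVec]
    push_cast
    split_ifs
    · nlinarith [mul_nonneg hm hq, mul_nonneg hq hs0, mul_nonneg hk0 hs0]
    · linarith
    · nlinarith [mul_le_mul_of_nonneg_left hclique hT0.le]

theorem stmt_11_general (n s k : ℕ) (hk : 2 ≤ k)
    (h1 : 3 * k + 10 ≤ 2 * n) (h2 : (k + 1) * s + 1 ≤ n) (hs1 : 1 < s) :
    specRad (modelB n s (k * s + 1)) < specRad (modelB n 1 (k + 1)) :=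
  (specRad_modelB_le hk hs1 h1 h2).trans_lt (lt_specRad_modelB_one (by omega))

/-- Lemma: for `k ≥ 2`, `n ≥ (3/2)k + 5`, `n ≥ (k+1)s + 1` and `s > 1`,
`ρ(sK_1 ∨ ((ks+1)K_1 ∪ K_{n-(k+1)s-1})) < ρ(K_1 ∨ ((k+1)K_1 ∪ K_{n-k-2}))`. -/
theorem stmt_11 (n s k : ℕ) (hk : 2 ≤ k) (hs : 1 ≤ s)
    (h1 : 3 * k + 10 ≤ 2 * n) (h2 : (k + 1) * s + 1 ≤ n) (hs1 : 1 < s) :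
    specRad (modelB n s (k * s + 1)) < specRad (modelB n 1 (k + 1)) :=
  stmt_11_general n s k hk h1 h2 hs1
end
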